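/- For the laziest minimal random walk with parameter p ∈ (0,1), E[(d_k)^2] ~ p/(k·a_k) as k → ∞, where d_k = M_k - M_{k-1} are the martingale differences of M_n = (H_n - E[H_n])/a_n; consequently s_n^2 := Σ_{k=n}^∞ E[(d_k)^2] ~ 1/a_n as n → ∞. -/

import Mathlib

open MeasureTheory ProbabilityTheory Filter Real

def lazyH {Ω : Type*} (X : ℕ → Ω → ℕ) (n : ℕ) (ω : Ω) : ℕ :=
  ∑ i ∈ Finset.Icc 1 n, X i ω

/-- `a n = Γ(n+p)/(Γ(n)Γ(1+p))`. -/
noncomputable def aSeq (p : ℝ) (n : ℕ) : ℝ :=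
  Real.Gamma (n + p) / (Real.Gamma n * Real.Gamma (1 + p))

/-- The centered, normalized position `M n = (H n - E[H n]) / a n`. -/
noncomputable def lazyM {Ω : Type*} [MeasurableSpace Ω] (μ : MeasureTheory.Measure Ω)
    (p : ℝ) (X : ℕ → Ω → ℕ) (n : ℕ) (ω : Ω) : ℝ :=
  ((lazyH X n ω : ℝ) - ∫ ω', (lazyH X n ω' : ℝ) ∂μ) / aSeq p n

/-- Martingale difference `d k = M k - M (k-1)`. -/
noncomputable def lazyD {Ω : Type*} [MeasurableSpace Ω] (μ : MeasureTheory.Measure Ω)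
    (p : ℝ) (X : ℕ → Ω → ℕ) (k : ℕ) (ω : Ω) : ℝ :=
  lazyM μ p X k ω - lazyM μ p X (k - 1) ω

/-!
Conditioning on `ℱ n` gives `E H n = a n`, the recursion
`E (H (n+1))² = (1 + 2p/n) E (H n)² + (p/n) a n` and
`E (d (n+1))² = ((p/n) a n - (p/n)² E (H n)²) / a (n+1)²`.
Since `E[H n (H n + 1)]` satisfies the homogeneous recursion, `E (H n)² ≤ 2 (a n)²`, and
log-convexity of `Γ` (Gautschi's inequality) gives `2^(p-1) n^p ≤ Γ(1+p) a n ≤ n^p`. So `a n → ∞`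
and `E (H n)² = o(n a n)`, which is the first asymptotic. For the second, `p/(k a k)` is
equivalent to `p/((k+p) a k) = 1/a k - 1/a (k+1)`; tails of series with equivalent positive terms
are equivalent, and this comparison series telescopes to `1/a n`.
-/

open scoped Topology

theorem Real.Gamma_add_le_Gamma_mul_rpow {x s : ℝ} (hx : 0 < x) (hs0 : 0 < s) (hs1 : s < 1) :
    Gamma (x + s) ≤ Gamma x * x ^ s := by
  have hΓ : 0 < Gamma x := Gamma_pos_of_pos hx
  calc Gamma (x + s) = Gamma ((1 - s) * x + s * (x + 1)) := by ring_nf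
    _ ≤ Gamma x ^ (1 - s) * Gamma (x + 1) ^ s :=
      Gamma_mul_add_mul_le_rpow_Gamma_mul_rpow_Gamma hx (by linarith) (by linarith) hs0 (by ring)
    _ = Gamma x * x ^ s := by
      rw [Gamma_add_one hx.ne', mul_comm x, mul_rpow hΓ.le hx.le, ← mul_assoc,
        ← rpow_add hΓ, sub_add_cancel, rpow_one]

lemma hasSum_sub_succ_of_antitone {f : ℕ → ℝ} (hf : Antitone f)
    (hf0 : Tendsto f atTop (𝓝 0)) : HasSum (fun j => f j - f (j + 1)) (f 0) := by
  rw [hasSum_iff_tendsto_nat_of_nonneg (fun j => sub_nonneg.2 (hf j.le_succ))]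
  simp only [Finset.sum_range_sub']
  simpa using (tendsto_const_nhds (x := f 0)).sub hf0

lemma Summable.nat_add_left {f : ℕ → ℝ} (hf : Summable f) (n : ℕ) :
    Summable fun j => f (n + j) := by
  simpa only [add_comm n] using (summable_nat_add_iff n).2 hf

lemma eventually_tsum_nat_add_le {f g : ℕ → ℝ} (hf : Summable f) (hg : Summable g)
    (hfg : ∀ᶠ k in atTop, f k ≤ g k) : ∀ᶠ n in atTop, ∑' j, f (n + j) ≤ ∑' j, g (n + j) := by
  obtain ⟨N, hN⟩ := eventually_atTop.1 hfg
  filter_upwards [eventually_ge_atTop N] with n hn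
  exact (hf.nat_add_left n).tsum_le_tsum (fun j => hN _ (by omega)) (hg.nat_add_left n)

lemma eventually_tsum_nat_add_pos {t : ℕ → ℝ} (ht : ∀ᶠ k in atTop, 0 < t k) (hts : Summable t) :
    ∀ᶠ n in atTop, 0 < ∑' j, t (n + j) := by
  obtain ⟨N, hN⟩ := eventually_atTop.1 ht
  filter_upwards [eventually_ge_atTop N] with n hn
  exact (hts.nat_add_left n).tsum_pos (fun j => (hN _ (by omega)).le) 0 (hN _ (by omega))

theorem tendsto_tsum_nat_add_div_of_tendsto_div {e t : ℕ → ℝ} (ht : ∀ᶠ k in atTop, 0 < t k)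
    (hts : Summable t) (h : Tendsto (fun k => e k / t k) atTop (𝓝 1)) :
    Tendsto (fun n => (∑' j, e (n + j)) / ∑' j, t (n + j)) atTop (𝓝 1) := by
  have hes : Summable e := (Asymptotics.isEquivalent_of_tendsto_one h).summable_iff_nat.2 hts
  have hpos := eventually_tsum_nat_add_pos ht hts
  rw [tendsto_order] at h ⊢
  constructor
  · intro a ha
    obtain ⟨c, hac, hc⟩ := exists_between ha
    have hce : ∀ᶠ k in atTop, c * t k ≤ e k := by
      filter_upwards [h.1 c hc, ht] with k hk htk
      exact ((lt_div_iff₀ htk).1 hk).le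
    filter_upwards [eventually_tsum_nat_add_le (hts.mul_left c) hes hce, hpos] with n hn hTn
    rw [tsum_mul_left] at hn
    rw [lt_div_iff₀ hTn]
    exact (mul_lt_mul_of_pos_right hac hTn).trans_le hn
  · intro b hb
    obtain ⟨c, hc, hcb⟩ := exists_between hb
    have hec : ∀ᶠ k in atTop, e k ≤ c * t k := by
      filter_upwards [h.2 c hc, ht] with k hk htk
      exact ((div_lt_iff₀ htk).1 hk).le
    filter_upwards [eventually_tsum_nat_add_le hes (hts.mul_left c) hec, hpos] with n hn hTn
    rw [tsum_mul_left] at hn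
    rw [div_lt_iff₀ hTn]
    exact hn.trans_lt (mul_lt_mul_of_pos_right hcb hTn)

lemma integral_mul_eq_integral_mul_of_condExp_ae_eq {Ω : Type*} {m m0 : MeasurableSpace Ω}
    {μ : Measure Ω} (hm : m ≤ m0) [SigmaFinite (μ.trim hm)] {f g h : Ω → ℝ}
    (hfh : μ[f | m] =ᵐ[μ] h) (hg : StronglyMeasurable[m] g) (hgf : Integrable (g * f) μ)
    (hf : Integrable f μ) : ∫ ω, g ω * f ω ∂μ = ∫ ω, g ω * h ω ∂μ :=
  calc ∫ ω, g ω * f ω ∂μ = ∫ ω, (μ[g * f | m]) ω ∂μ := (integral_condExp hm).symm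
    _ = ∫ ω, g ω * h ω ∂μ := integral_congr_ae
      ((condExp_mul_of_stronglyMeasurable_left hg hgf hf).trans ((EventuallyEq.refl _ g).mul hfh))

lemma integrable_natCast_of_le {Ω : Type*} {m0 : MeasurableSpace Ω} {μ : Measure Ω}
    [IsFiniteMeasure μ] {f : Ω → ℕ} (hf : Measurable f) (C : ℕ) (hC : ∀ ω, f ω ≤ C) :
    Integrable (fun ω => (f ω : ℝ)) μ :=
  .of_bound (measurable_from_top.comp hf).aestronglyMeasurable C
    (ae_of_all _ fun ω => by simpa using hC ω)

section aSeq

variable {p : ℝ}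

lemma aSeq_pos (hp : 0 < p) {n : ℕ} (hn : 1 ≤ n) : 0 < aSeq p n := by
  have hn0 : (0 : ℝ) < n := by exact_mod_cast hn
  have := Gamma_pos_of_pos hn0
  have := Gamma_pos_of_pos (show 0 < (n : ℝ) + p by positivity)
  have := Gamma_pos_of_pos (show (0 : ℝ) < 1 + p by positivity)
  unfold aSeq
  positivity

lemma aSeq_one (hp : 0 < p) : aSeq p 1 = 1 := by
  have := (Gamma_pos_of_pos (show (0 : ℝ) < 1 + p by positivity)).ne'
  simp_all [aSeq, add_comm]

lemma aSeq_succ (hp : 0 < p) {n : ℕ} (hn : 1 ≤ n) :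
    aSeq p (n + 1) = aSeq p n * ((n + p) / n) := by
  have hn0 : (0 : ℝ) < n := by exact_mod_cast hn
  have := (Gamma_pos_of_pos hn0).ne'
  simp only [aSeq, Nat.cast_add_one, add_right_comm _ (1 : ℝ) p,
    Gamma_add_one (show (n : ℝ) + p ≠ 0 by positivity), Gamma_add_one hn0.ne']
  field_simp

lemma aSeq_le_rpow (hp : 0 < p) (hp1 : p < 1) {n : ℕ} (hn : 1 ≤ n) :
    aSeq p n ≤ (n : ℝ) ^ p / Gamma (1 + p) := by
  have hn0 : (0 : ℝ) < n := by exact_mod_cast hn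
  rw [aSeq, ← div_div, div_le_div_iff_of_pos_right (Gamma_pos_of_pos (by linarith)),
    div_le_iff₀' (Gamma_pos_of_pos hn0)]
  exact Gamma_add_le_Gamma_mul_rpow hn0 hp hp1

lemma rpow_le_aSeq (hp : 0 < p) (hp1 : p < 1) {n : ℕ} (hn : 1 ≤ n) :
    2 ^ (p - 1) * (n : ℝ) ^ p / Gamma (1 + p) ≤ aSeq p n := by
  have hn0 : (0 : ℝ) < n := by exact_mod_cast hn
  have hnp : 0 < (n : ℝ) + p := by positivity
  have hGautschi : n * Gamma n ≤ Gamma (n + p) * (n + p) ^ (1 - p) := by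
    have := Gamma_add_le_Gamma_mul_rpow hnp (by linarith) (by linarith : 1 - p < 1)
    rwa [show (n : ℝ) + p + (1 - p) = n + 1 by ring, Gamma_add_one hn0.ne'] at this
  have h2n : ((n : ℝ) + p) ^ (1 - p) ≤ (2 * n) ^ (1 - p) :=
    rpow_le_rpow hnp.le (by linarith [show (1 : ℝ) ≤ n by exact_mod_cast hn]) (by linarith)
  have hpow : 2 ^ (p - 1) * (n : ℝ) ^ p * (2 * n) ^ (1 - p) = n := by
    rw [mul_rpow (by norm_num) hn0.le, mul_mul_mul_comm, ← rpow_add two_pos, ← rpow_add hn0]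
    norm_num
  rw [aSeq, ← div_div, div_le_div_iff_of_pos_right (Gamma_pos_of_pos (by linarith)),
    le_div_iff₀ (Gamma_pos_of_pos hn0)]
  refine le_of_mul_le_mul_right ?_ (show 0 < ((2 : ℝ) * n) ^ (1 - p) by positivity)
  calc 2 ^ (p - 1) * (n : ℝ) ^ p * Gamma n * (2 * n) ^ (1 - p) = n * Gamma n := by
        linear_combination Gamma n * hpow
    _ ≤ Gamma (n + p) * (2 * n) ^ (1 - p) :=
        hGautschi.trans (mul_le_mul_of_nonneg_left h2n (Gamma_pos_of_pos hnp).le)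

lemma tendsto_aSeq_atTop (hp : 0 < p) (hp1 : p < 1) : Tendsto (aSeq p) atTop atTop := by
  refine tendsto_atTop_mono' _ ((eventually_ge_atTop 1).mono fun n hn => rpow_le_aSeq hp hp1 hn) ?_
  refine (Tendsto.atTop_div_const (Gamma_pos_of_pos (by linarith)) ?_)
  exact ((tendsto_rpow_atTop hp).comp tendsto_natCast_atTop_atTop).const_mul_atTop (by positivity)

lemma tendsto_aSeq_div_self (hp : 0 < p) (hp1 : p < 1) :
    Tendsto (fun n : ℕ => aSeq p n / n) atTop (𝓝 0) := by
  have hlim : Tendsto (fun n : ℕ => (n : ℝ) ^ (-(1 - p)) / Gamma (1 + p)) atTop (𝓝 0) := by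
    simpa using ((tendsto_rpow_neg_atTop (by linarith : 0 < 1 - p)).comp
      tendsto_natCast_atTop_atTop).div_const (Gamma (1 + p))
  refine squeeze_zero' ?_ ?_ hlim
  · filter_upwards [eventually_ge_atTop 1] with n hn
    exact div_nonneg (aSeq_pos hp hn).le n.cast_nonneg
  · filter_upwards [eventually_ge_atTop 1] with n hn
    have hn0 : (0 : ℝ) < n := by exact_mod_cast hn
    rw [neg_sub, rpow_sub_one hn0.ne', div_right_comm]
    exact div_le_div_of_nonneg_right (aSeq_le_rpow hp hp1 hn) hn0.le

lemma aSeq_le_aSeq_succ (hp : 0 < p) {n : ℕ} (hn : 1 ≤ n) : aSeq p n ≤ aSeq p (n + 1) := by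
  have hn0 : (0 : ℝ) < n := by exact_mod_cast hn
  rw [aSeq_succ hp hn]
  exact le_mul_of_one_le_right (aSeq_pos hp hn).le ((one_le_div hn0).2 (by linarith))

lemma inv_aSeq_sub_inv_aSeq_succ (hp : 0 < p) {n : ℕ} (hn : 1 ≤ n) :
    1 / aSeq p n - 1 / aSeq p (n + 1) = p / ((n + p) * aSeq p n) := by
  have hn0 : (0 : ℝ) < n := by exact_mod_cast hn
  have := (aSeq_pos hp hn).ne'
  rw [aSeq_succ hp hn]
  field_simp
  ring

lemma hasSum_inv_aSeq_sub_inv_aSeq_succ (hp : 0 < p) (hp1 : p < 1) {n : ℕ} (hn : 1 ≤ n) :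
    HasSum (fun j => 1 / aSeq p (n + j) - 1 / aSeq p (n + j + 1)) (1 / aSeq p n) := by
  have hanti : Antitone fun j => 1 / aSeq p (n + j) := antitone_nat_of_succ_le fun j =>
    one_div_le_one_div_of_le (aSeq_pos hp (by omega)) (aSeq_le_aSeq_succ hp (by omega))
  have hlim : Tendsto (fun j => 1 / aSeq p (n + j)) atTop (𝓝 0) := by
    simpa only [one_div, Pi.inv_def, Function.comp_def] using ((tendsto_aSeq_atTop hp hp1).comp
      (tendsto_atTop_mono (fun j => Nat.le_add_left j n) tendsto_id)).inv_tendsto_atTop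
  simpa only [add_assoc, add_zero] using hasSum_sub_succ_of_antitone hanti hlim

theorem tendsto_tsum_nat_add_div_inv_aSeq (hp : 0 < p) (hp1 : p < 1) {e : ℕ → ℝ}
    (he : Tendsto (fun k : ℕ => e k / (p / (k * aSeq p k))) atTop (𝓝 1)) :
    Tendsto (fun n : ℕ => (∑' j, e (n + j)) / (1 / aSeq p n)) atTop (𝓝 1) := by
  set t : ℕ → ℝ := fun k => 1 / aSeq p k - 1 / aSeq p (k + 1)
  have ht_pos : ∀ᶠ k in atTop, 0 < t k := by
    filter_upwards [eventually_ge_atTop 1] with k hk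
    have := aSeq_pos hp hk
    simp only [t, inv_aSeq_sub_inv_aSeq_succ hp hk]
    positivity
  have ht : Summable t := by
    refine (summable_nat_add_iff (f := t) 1).1 ?_
    simpa only [t, add_comm 1] using (hasSum_inv_aSeq_sub_inv_aSeq_succ hp hp1 le_rfl).summable
  have hfrac : Tendsto (fun k : ℕ => ((k : ℝ) + p) / k) atTop (𝓝 1) := by
    simpa [add_comm] using tendsto_add_mul_div_add_mul_atTop_nhds p (0 : ℝ) 1 one_ne_zero
  have het : Tendsto (fun k => e k / t k) atTop (𝓝 1) := by
    have := he.mul hfrac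
    rw [mul_one] at this
    refine this.congr' ?_
    filter_upwards [eventually_ge_atTop 1] with k hk
    have hk0 : (0 : ℝ) < k := by exact_mod_cast hk
    have := (aSeq_pos hp hk).ne'
    simp only [t, inv_aSeq_sub_inv_aSeq_succ hp hk]
    field_simp
  refine (tendsto_tsum_nat_add_div_of_tendsto_div ht_pos ht het).congr' ?_
  filter_upwards [eventually_ge_atTop 1] with n hn
  rw [(hasSum_inv_aSeq_sub_inv_aSeq_succ hp hp1 hn).tsum_eq]

end aSeq

lemma lazyH_succ {Ω : Type*} (X : ℕ → Ω → ℕ) (n : ℕ) (ω : Ω) :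
    lazyH X (n + 1) ω = lazyH X n ω + X (n + 1) ω :=
  Finset.sum_Icc_succ_top (by omega) _

/-- The laziest minimal random walk: `X 1 = 1`, and given `ℱ n` the next step `X (n + 1)` is
Bernoulli with success probability `p * H n / n`. -/
structure IsLazyWalk {Ω : Type*} {m0 : MeasurableSpace Ω} (μ : Measure Ω) (ℱ : Filtration ℕ m0)
    (p : ℝ) (X : ℕ → Ω → ℕ) : Prop where
  le_one : ∀ n ω, X n ω ≤ 1
  first_eq_one : ∀ᵐ ω ∂μ, X 1 ω = 1
  adapted : ∀ n, Measurable[ℱ n] (X n)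
  condExp_succ : ∀ n, 1 ≤ n →
    μ[(fun ω => (X (n + 1) ω : ℝ)) | ℱ n] =ᵐ[μ] fun ω => p * (lazyH X n ω : ℝ) / n

namespace IsLazyWalk

variable {Ω : Type*} {m0 : MeasurableSpace Ω} {μ : Measure Ω} {ℱ : Filtration ℕ m0} {p : ℝ}
  {X : ℕ → Ω → ℕ}

lemma lazyH_le (hX : IsLazyWalk μ ℱ p X) (n : ℕ) (ω : Ω) : lazyH X n ω ≤ n :=
  (Finset.sum_le_sum fun i _ => hX.le_one i ω).trans_eq (by simp)

lemma sq_X (hX : IsLazyWalk μ ℱ p X) (n : ℕ) (ω : Ω) : (X n ω : ℝ) ^ 2 = X n ω := by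
  rcases Nat.le_one_iff_eq_zero_or_eq_one.1 (hX.le_one n ω) with h | h <;> simp [h]

lemma measurable_lazyH (hX : IsLazyWalk μ ℱ p X) (n : ℕ) : Measurable[ℱ n] (lazyH X n) :=
  Finset.measurable_sum _ fun i hi => (hX.adapted i).mono (ℱ.mono (Finset.mem_Icc.1 hi).2) le_rfl

lemma lazyH_one_ae_eq (hX : IsLazyWalk μ ℱ p X) : ∀ᵐ ω ∂μ, (lazyH X 1 ω : ℝ) = 1 := by
  filter_upwards [hX.first_eq_one] with ω hω
  simp [lazyH, hω]

variable [IsProbabilityMeasure μ]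

lemma integrable_X (hX : IsLazyWalk μ ℱ p X) (n : ℕ) :
    Integrable (fun ω => (X n ω : ℝ)) μ :=
  integrable_natCast_of_le ((hX.adapted n).mono (ℱ.le n) le_rfl) 1 (hX.le_one n)

lemma integrable_lazyH_mul_X (hX : IsLazyWalk μ ℱ p X) (n m : ℕ) :
    Integrable (fun ω => (lazyH X n ω : ℝ) * X m ω) μ := by
  have hmeas : Measurable fun ω => lazyH X n ω * X m ω :=
    ((hX.measurable_lazyH n).mono (ℱ.le n) le_rfl).mul ((hX.adapted m).mono (ℱ.le m) le_rfl)
  simpa only [Nat.cast_mul] using integrable_natCast_of_le (μ := μ) hmeas n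
    fun ω => by simpa using Nat.mul_le_mul (hX.lazyH_le n ω) (hX.le_one m ω)

lemma integrable_lazyH_pow (hX : IsLazyWalk μ ℱ p X) (n k : ℕ) :
    Integrable (fun ω => (lazyH X n ω : ℝ) ^ k) μ := by
  simpa only [Nat.cast_pow] using integrable_natCast_of_le (μ := μ)
    (((hX.measurable_lazyH n).mono (ℱ.le n) le_rfl).pow_const k)
    (n ^ k) fun ω => Nat.pow_le_pow_left (hX.lazyH_le n ω) k

lemma integral_X_succ (hX : IsLazyWalk μ ℱ p X) {n : ℕ} (hn : 1 ≤ n) :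
    ∫ ω, (X (n + 1) ω : ℝ) ∂μ = p / n * ∫ ω, (lazyH X n ω : ℝ) ∂μ := by
  rw [← integral_condExp (ℱ.le n), integral_congr_ae (hX.condExp_succ n hn), ← integral_const_mul]
  congr 1 with ω
  ring

lemma integral_lazyH_mul_X_succ (hX : IsLazyWalk μ ℱ p X) {n : ℕ} (hn : 1 ≤ n) :
    ∫ ω, (lazyH X n ω : ℝ) * X (n + 1) ω ∂μ = p / n * ∫ ω, (lazyH X n ω : ℝ) ^ 2 ∂μ := by
  rw [integral_mul_eq_integral_mul_of_condExp_ae_eq (g := fun ω => (lazyH X n ω : ℝ)) (ℱ.le n)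
    (hX.condExp_succ n hn)
    (measurable_from_top.comp (hX.measurable_lazyH n)).stronglyMeasurable
    (hX.integrable_lazyH_mul_X n (n + 1)) (hX.integrable_X (n + 1)), ← integral_const_mul]
  congr 1 with ω
  ring

lemma integral_lazyH (hX : IsLazyWalk μ ℱ p X) (hp : 0 < p) {n : ℕ} (hn : 1 ≤ n) :
    ∫ ω, (lazyH X n ω : ℝ) ∂μ = aSeq p n := by
  induction n, hn using Nat.le_induction with
  | base => simp [integral_congr_ae hX.lazyH_one_ae_eq, aSeq_one hp]
  | succ n hn ih =>
    have hn0 : (n : ℝ) ≠ 0 := by positivity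
    simp only [lazyH_succ, Nat.cast_add]
    rw [integral_add (hX.integrable_lazyH_pow n 1 |>.congr (by simp)) (hX.integrable_X _),
      hX.integral_X_succ hn, ih, aSeq_succ hp hn]
    field_simp

lemma integral_lazyH_sq_succ (hX : IsLazyWalk μ ℱ p X) (hp : 0 < p) {n : ℕ} (hn : 1 ≤ n) :
    ∫ ω, (lazyH X (n + 1) ω : ℝ) ^ 2 ∂μ
      = (1 + 2 * (p / n)) * ∫ ω, (lazyH X n ω : ℝ) ^ 2 ∂μ + p / n * aSeq p n := by
  have hsq : ∀ ω, (lazyH X (n + 1) ω : ℝ) ^ 2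
      = (lazyH X n ω : ℝ) ^ 2 + (2 * ((lazyH X n ω : ℝ) * X (n + 1) ω) + X (n + 1) ω) := by
    intro ω
    rw [lazyH_succ, Nat.cast_add]
    linear_combination hX.sq_X (n + 1) ω
  simp only [hsq]
  rw [integral_add (hX.integrable_lazyH_pow n 2)
      (((hX.integrable_lazyH_mul_X n (n + 1)).const_mul 2).fun_add (hX.integrable_X _)),
    integral_add ((hX.integrable_lazyH_mul_X n (n + 1)).const_mul 2) (hX.integrable_X _),
    integral_const_mul, hX.integral_lazyH_mul_X_succ hn, hX.integral_X_succ hn,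
    hX.integral_lazyH hp hn]
  ring

lemma lazyD_succ (hX : IsLazyWalk μ ℱ p X) (hp : 0 < p) {n : ℕ} (hn : 1 ≤ n) (ω : Ω) :
    lazyD μ p X (n + 1) ω = (X (n + 1) ω - p / n * lazyH X n ω) / aSeq p (n + 1) := by
  have hn0 : (n : ℝ) ≠ 0 := by positivity
  have ha := (aSeq_pos hp hn).ne'
  rw [lazyD, lazyM, lazyM, Nat.add_sub_cancel, hX.integral_lazyH hp (by omega),
    hX.integral_lazyH hp hn, lazyH_succ, Nat.cast_add, aSeq_succ hp hn]
  field_simp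
  ring

lemma integral_lazyD_sq_succ (hX : IsLazyWalk μ ℱ p X) (hp : 0 < p) {n : ℕ} (hn : 1 ≤ n) :
    ∫ ω, lazyD μ p X (n + 1) ω ^ 2 ∂μ
      = (p / n * aSeq p n - (p / n) ^ 2 * ∫ ω, (lazyH X n ω : ℝ) ^ 2 ∂μ) / aSeq p (n + 1) ^ 2 := by
  have hsq : ∀ ω, lazyD μ p X (n + 1) ω ^ 2 = (X (n + 1) ω + (-(2 * (p / n)) *
      ((lazyH X n ω : ℝ) * X (n + 1) ω) + (p / n) ^ 2 * (lazyH X n ω : ℝ) ^ 2)) /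
        aSeq p (n + 1) ^ 2 := by
    intro ω
    rw [hX.lazyD_succ hp hn, div_pow]
    linear_combination hX.sq_X (n + 1) ω / aSeq p (n + 1) ^ 2
  simp only [hsq]
  rw [integral_div, integral_add (hX.integrable_X _)
      (((hX.integrable_lazyH_mul_X n (n + 1)).const_mul _).fun_add
      ((hX.integrable_lazyH_pow n 2).const_mul _)),
    integral_add ((hX.integrable_lazyH_mul_X n (n + 1)).const_mul _)
      ((hX.integrable_lazyH_pow n 2).const_mul _),
    integral_const_mul, integral_const_mul, hX.integral_lazyH_mul_X_succ hn,
    hX.integral_X_succ hn, hX.integral_lazyH hp hn]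
  ring

lemma integral_lazyH_sq_le (hX : IsLazyWalk μ ℱ p X) (hp : 0 < p) {n : ℕ} (hn : 1 ≤ n) :
    ∫ ω, (lazyH X n ω : ℝ) ^ 2 ∂μ ≤ 2 * aSeq p n ^ 2 := by
  -- `E[H n (H n + 1)]` is multiplied by `1 + 2p/n ≤ (1 + p/n) ^ 2` at each step.
  suffices ∫ ω, (lazyH X n ω : ℝ) ^ 2 ∂μ + aSeq p n ≤ 2 * aSeq p n ^ 2 by
    linarith [aSeq_pos hp hn]
  induction n, hn using Nat.le_induction with
  | base =>
    rw [integral_congr_ae (g := fun _ => 1) (hX.lazyH_one_ae_eq.mono fun ω hω => by simp [hω]),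
      aSeq_one hp]
    norm_num
  | succ n hn ih =>
    have hn0 : (0 : ℝ) < n := by exact_mod_cast hn
    have hsucc : aSeq p (n + 1) = (1 + p / n) * aSeq p n := by
      rw [aSeq_succ hp hn]; field_simp
    calc ∫ ω, (lazyH X (n + 1) ω : ℝ) ^ 2 ∂μ + aSeq p (n + 1)
        = (1 + 2 * (p / n)) * (∫ ω, (lazyH X n ω : ℝ) ^ 2 ∂μ + aSeq p n) := by
          rw [hX.integral_lazyH_sq_succ hp hn, hsucc]; ring
      _ ≤ (1 + 2 * (p / n)) * (2 * aSeq p n ^ 2) := by gcongr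
      _ ≤ (1 + p / n) ^ 2 * (2 * aSeq p n ^ 2) := by gcongr; nlinarith [sq_nonneg (p / n)]
      _ = 2 * aSeq p (n + 1) ^ 2 := by rw [hsucc]; ring

theorem tendsto_integral_lazyD_sq_div (hX : IsLazyWalk μ ℱ p X) (hp : 0 < p) (hp1 : p < 1) :
    Tendsto (fun k : ℕ => (∫ ω, lazyD μ p X k ω ^ 2 ∂μ) / (p / (k * aSeq p k))) atTop (𝓝 1) := by
  set B : ℕ → ℝ := fun n => ∫ ω, (lazyH X n ω : ℝ) ^ 2 ∂μ
  have hB_div : Tendsto (fun n : ℕ => B n / (n * aSeq p n)) atTop (𝓝 0) := by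
    refine squeeze_zero' ?_ ?_ (by simpa using (tendsto_aSeq_div_self hp hp1).const_mul 2)
    · filter_upwards [eventually_ge_atTop 1] with n hn
      exact div_nonneg (integral_nonneg fun ω => sq_nonneg _)
        (mul_nonneg n.cast_nonneg (aSeq_pos hp hn).le)
    · filter_upwards [eventually_ge_atTop 1] with n hn
      have hn0 : (0 : ℝ) < n := by exact_mod_cast hn
      have ha := aSeq_pos hp hn
      rw [div_le_iff₀ (by positivity)]
      calc B n ≤ 2 * aSeq p n ^ 2 := hX.integral_lazyH_sq_le hp hn
        _ = 2 * (aSeq p n / n) * (n * aSeq p n) := by field_simp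
  have hfrac : Tendsto (fun n : ℕ => ((n : ℝ) + 1) / (n + p)) atTop (𝓝 1) := by
    simpa [add_comm] using tendsto_add_mul_div_add_mul_atTop_nhds (1 : ℝ) p 1 one_ne_zero
  have hlim := hfrac.mul ((tendsto_const_nhds (x := (1 : ℝ))).sub (hB_div.const_mul p))
  rw [mul_zero, sub_zero, mul_one] at hlim
  rw [← tendsto_add_atTop_iff_nat 1]
  refine hlim.congr' ?_
  filter_upwards [eventually_ge_atTop 1] with n hn
  have hn0 : (0 : ℝ) < n := by exact_mod_cast hn
  have := (aSeq_pos hp hn).ne'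
  rw [Nat.cast_add_one, hX.integral_lazyD_sq_succ hp hn, aSeq_succ hp hn]
  simp only [B]
  field_simp

end IsLazyWalk

theorem stmt12 {Ω : Type*} {m0 : MeasurableSpace Ω} (μ : Measure Ω) [IsProbabilityMeasure μ]
    (ℱ : Filtration ℕ m0) (p : ℝ) (hp : 0 < p) (hp1 : p < 1)
    (X : ℕ → Ω → ℕ)
    (hXval : ∀ n ω, X n ω ≤ 1)
    (hX1 : ∀ᵐ ω ∂μ, X 1 ω = 1)
    (hadp : ∀ n, Measurable[ℱ n] (X n))
    (hcond : ∀ n : ℕ, 1 ≤ n →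
      μ[(fun ω => (X (n + 1) ω : ℝ)) | ℱ n] =ᵐ[μ]
        fun ω => p * (lazyH X n ω : ℝ) / n) :
    Tendsto (fun k : ℕ =>
        (∫ ω, (lazyD μ p X k ω) ^ 2 ∂μ) / (p / ((k : ℝ) * aSeq p k))) atTop (nhds 1) ∧
    Tendsto (fun n : ℕ =>
        (∑' j : ℕ, ∫ ω, (lazyD μ p X (n + j) ω) ^ 2 ∂μ) / (1 / aSeq p n)) atTop (nhds 1) := by
  have hX : IsLazyWalk μ ℱ p X := ⟨hXval, hX1, hadp, hcond⟩
  have hdiff := hX.tendsto_integral_lazyD_sq_div hp hp1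
  exact ⟨hdiff, tendsto_tsum_nat_add_div_inv_aSeq hp hp1 hdiff⟩
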